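/- Let x_1, ..., x_{m+1} be points in R^{n+1} such that |x_i - x_{i+1}| ≤ K̂ (1 + |x_i|)^{-1} for all 1 ≤ i ≤ m, where K̂ ≥ 0. Then |x_1 - x_{m+1}| ≤ ((K̂+1)^m - 1)(1 + |x_1|)^{-1}. -/

import Mathlib

/-! Induction on `m`. The inductive bound for `x₁, …, x_{m+1}` puts `x₁` within
`(K̂+1)^m - 1` of `x_{m+1}`, hence `1 + ‖x₁‖ ≤ (K̂+1)^m (1 + ‖x_{m+1}‖)`. So the next step, of
length at most `K̂ (1 + ‖x_{m+1}‖)⁻¹`, is at most `K̂ (K̂+1)^m (1 + ‖x₁‖)⁻¹`, and the triangle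
inequality adds up to `((K̂+1)^(m+1) - 1)(1 + ‖x₁‖)⁻¹`. -/

lemma one_add_norm_le_mul_one_add_norm {E : Type*} [SeminormedAddCommGroup E] {x y : E} {c : ℝ}
    (hc : 1 ≤ c) (h : ‖x - y‖ ≤ c - 1) : 1 + ‖x‖ ≤ c * (1 + ‖y‖) := by
  have hxy : ‖x‖ ≤ ‖y‖ + ‖x - y‖ := norm_le_insert' x y
  nlinarith [norm_nonneg y]

theorem norm_sub_last_le_of_norm_sub_succ_le {E : Type*} [SeminormedAddCommGroup E]
    {K : ℝ} (hK : 0 ≤ K) (m : ℕ) (x : Fin (m + 1) → E)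
    (h : ∀ i : Fin m, ‖x i.castSucc - x i.succ‖ ≤ K * (1 + ‖x i.castSucc‖)⁻¹) :
    ‖x 0 - x (Fin.last m)‖ ≤ ((K + 1) ^ m - 1) * (1 + ‖x 0‖)⁻¹ := by
  induction m with
  | zero => simp
  | succ m ih =>
    set w : Fin (m + 2) := (Fin.last m).castSucc
    set c : ℝ := (K + 1) ^ m
    have hc : 1 ≤ c := one_le_pow₀ (by linarith)
    have hinv_le_one : (1 + ‖x 0‖)⁻¹ ≤ 1 := inv_le_one_of_one_le₀ (by simp)
    have hinit : ‖x 0 - x w‖ ≤ (c - 1) * (1 + ‖x 0‖)⁻¹ :=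
      ih (fun i => x i.castSucc) fun i => by simpa only [Fin.succ_castSucc] using h i.castSucc
    have hlast : ‖x w - x (Fin.last (m + 1))‖ ≤ K * (1 + ‖x w‖)⁻¹ := by
      simpa only [Fin.succ_last] using h (Fin.last m)
    have hgrowth : (1 + ‖x w‖)⁻¹ ≤ c * (1 + ‖x 0‖)⁻¹ := by
      have hnear : ‖x 0 - x w‖ ≤ c - 1 :=
        hinit.trans (mul_le_of_le_one_right (by linarith) hinv_le_one)
      rw [← div_eq_mul_inv, le_div_iff₀ (by positivity), mul_comm, ← div_eq_mul_inv,
        div_le_iff₀ (by positivity)]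
      exact one_add_norm_le_mul_one_add_norm hc hnear
    calc ‖x 0 - x (Fin.last (m + 1))‖ ≤ ‖x 0 - x w‖ + ‖x w - x (Fin.last (m + 1))‖ :=
          norm_sub_le_norm_sub_add_norm_sub _ _ _
      _ ≤ (c - 1) * (1 + ‖x 0‖)⁻¹ + K * (c * (1 + ‖x 0‖)⁻¹) :=
          add_le_add hinit (hlast.trans (mul_le_mul_of_nonneg_left hgrowth hK))
      _ = ((K + 1) ^ (m + 1) - 1) * (1 + ‖x 0‖)⁻¹ := by rw [pow_succ]; ring

/-- **Lemma 5.1 (distortion lemma).** If `x₁, …, x_{m+1}` are points in `ℝ^{n+1}` with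
`‖xᵢ - x_{i+1}‖ ≤ K̂ (1 + ‖xᵢ‖)⁻¹` for `1 ≤ i ≤ m` and `K̂ ≥ 0`, then
`‖x₁ - x_{m+1}‖ ≤ ((K̂+1)^m - 1)(1 + ‖x₁‖)⁻¹`. -/
theorem stmt0 (n m : ℕ) (Khat : ℝ) (hK : 0 ≤ Khat)
    (x : Fin (m + 1) → EuclideanSpace ℝ (Fin (n + 1)))
    (h : ∀ i : Fin m, ‖x i.castSucc - x i.succ‖ ≤ Khat * (1 + ‖x i.castSucc‖)⁻¹) :
    ‖x 0 - x (Fin.last m)‖ ≤ ((Khat + 1) ^ m - 1) * (1 + ‖x 0‖)⁻¹ :=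
  norm_sub_last_le_of_norm_sub_succ_le hK m x h
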